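/- arXiv:2111.04622 — 4 statements merged into one kernel-verified Lean document; each statement's English description precedes it below -/
import Mathlib

section
/- Let R be a commutative ring and V an R-module equipped with pairwise commuting R-linear endomorphisms ∂_1,…,∂_r. Let W := ⊕_{α∈ℕ^r} V, whose elements are written as finite sums Σ_α m_α w^α with m_α ∈ V. Define the R-linear map φ : W → V by φ(Σ_α m_α w^α) = Σ_α ∂^α(m_α), where ∂^α := ∂_1^{α_1}∘…∘∂_r^{α_r}, and for 1 ≤ i ≤ r define D_i : W → W by D_i(Σ_α m_α w^α) = Σ_α ∂_i(m_α) w^α − Σ_α m_α w^{α+e_i}, where e_i ∈ ℕ^r is the i-th standard unit vector. Then the kernel of φ equals Σ_{i=1}^r image(D_i). -/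
/-!
Write `S` for the sum of the images of the `D_i`. Since `D_i (m w^α) = ∂_i(m) w^α - m w^(α+e_i)`,
modulo `S` one may trade a factor `w_i` for an application of `∂_i`; doing so repeatedly gives
`m w^α ≡ ∂^α(m) w^0 = φ(m w^α) w^0`, hence `x ≡ φ(x) w^0 (mod S)` for every `x`, and `ker φ ⊆ S`.
Conversely `φ ∘ D_i = 0` because `∂^(α+e_i) = ∂^α ∘ ∂_i`, which is where commutativity of the `∂_i`
enters: it makes the ordered product `∂^α` a monoid homomorphism in `α`.
-/

open Finsupp

section CommutingPowers

variable {M : Type*} [Monoid M]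

theorem pairwise_commute_powersHom {ι : Type*} {pd : ι → M}
    (hcomm : ∀ i j, Commute (pd i) (pd j)) :
    Pairwise fun i j => ∀ x y, Commute (powersHom M (pd i) x) (powersHom M (pd j) y) :=
  fun i j _ _ _ => (hcomm i j).pow_pow _ _

variable {r : ℕ} {pd : Fin r → M}

theorem List.prod_ofFn_pow_eq_noncommPiCoprod (hcomm : ∀ i j, Commute (pd i) (pd j))
    (α : Fin r → ℕ) :
    (List.ofFn fun j => pd j ^ α j).prod =
      MonoidHom.noncommPiCoprod (fun j => powersHom M (pd j)) (pairwise_commute_powersHom hcomm)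
        (fun j => Multiplicative.ofAdd (α j)) := by
  simp [MonoidHom.noncommPiCoprod, Finset.noncommProd, Fin.univ_val_map]

theorem List.prod_ofFn_pow_add_single (hcomm : ∀ i j, Commute (pd i) (pd j))
    (α : Fin r →₀ ℕ) (i : Fin r) :
    (List.ofFn fun j => pd j ^ (α + single i 1 : Fin r →₀ ℕ) j).prod =
      (List.ofFn fun j => pd j ^ α j).prod * pd i := by
  have hsplit : (fun j => Multiplicative.ofAdd ((α + single i 1 : Fin r →₀ ℕ) j)) =
      (fun j => Multiplicative.ofAdd (α j)) * Pi.mulSingle i (Multiplicative.ofAdd 1) := by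
    ext j
    rcases eq_or_ne j i with rfl | hj <;> simp [*]
  rw [prod_ofFn_pow_eq_noncommPiCoprod hcomm, prod_ofFn_pow_eq_noncommPiCoprod hcomm, hsplit,
    map_mul, MonoidHom.noncommPiCoprod_mulSingle, powersHom_apply, toAdd_ofAdd, pow_one]

end CommutingPowers

@[elab_as_elim]
theorem Finsupp.induction_add_single_one {σ : Type*} {motive : (σ →₀ ℕ) → Prop} (zero : motive 0)
    (add_single_one : ∀ α i, motive α → motive (α + single i 1)) (α : σ →₀ ℕ) : motive α := by
  induction α using Finsupp.induction with
  | zero => exact zero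
  | single_add i n β _ _ ih =>
    have h : ∀ k, motive (β + single i k) := by
      intro k
      induction k with
      | zero => simpa using ih
      | succ k ihk => simpa only [single_add, ← add_assoc] using add_single_one _ i ihk
    simpa only [add_comm] using h n

section ActSubMulVar

variable {R V σ : Type*} [Ring R] [AddCommGroup V] [Module R V]
  {mon : (σ →₀ ℕ) → Module.End R V} {pd : σ → Module.End R V}

variable (pd) in
/-- The operator `D_i`: `∂_i` on coefficients minus multiplication by `w_i`. -/
noncomputable def actSubMulVar (i : σ) : ((σ →₀ ℕ) →₀ V) →ₗ[R] ((σ →₀ ℕ) →₀ V) :=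
  mapRange.linearMap (pd i) - lmapDomain V R (· + single i 1)

theorem actSubMulVar_single (i : σ) (α : σ →₀ ℕ) (m : V) :
    actSubMulVar pd i (single α m) = single α (pd i m) - single (α + single i 1) m := by
  simp [actSubMulVar, mapDomain_single]

theorem lsum_comp_actSubMulVar (hmon : ∀ α i, mon (α + single i 1) = mon α * pd i) (i : σ) :
    lsum ℕ mon ∘ₗ actSubMulVar pd i = 0 := by
  refine lhom_ext fun α m => ?_
  rw [LinearMap.comp_apply, actSubMulVar_single, map_sub, lsum_single, lsum_single, hmon,
    Module.End.mul_apply, sub_self, LinearMap.zero_apply]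

theorem single_sub_single_zero_mem_iSup_range (hmon0 : mon 0 = 1)
    (hmon : ∀ α i, mon (α + single i 1) = mon α * pd i) (α : σ →₀ ℕ) (m : V) :
    single α m - single 0 (mon α m) ∈ ⨆ i, LinearMap.range (actSubMulVar pd i) := by
  induction α using Finsupp.induction_add_single_one generalizing m with
  | zero => simp [hmon0]
  | add_single_one α i ih =>
    have hstep : single α (pd i m) - single (α + single i 1) m ∈
        ⨆ i, LinearMap.range (actSubMulVar pd i) :=
      Submodule.mem_iSup_of_mem i ⟨single α m, actSubMulVar_single i α m⟩
    have := Submodule.sub_mem _ (ih (pd i m)) hstep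
    rwa [sub_sub_sub_cancel_left, ← Module.End.mul_apply, ← hmon] at this

theorem sub_single_zero_lsum_mem_iSup_range (hmon0 : mon 0 = 1)
    (hmon : ∀ α i, mon (α + single i 1) = mon α * pd i) (x : (σ →₀ ℕ) →₀ V) :
    x - single 0 (lsum ℕ mon x) ∈ ⨆ i, LinearMap.range (actSubMulVar pd i) := by
  induction x using Finsupp.induction_linear with
  | zero => simp
  | add x y hx hy =>
    simpa only [map_add, single_add, add_sub_add_comm] using Submodule.add_mem _ hx hy
  | single α m => simpa using single_sub_single_zero_mem_iSup_range hmon0 hmon α m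

theorem ker_lsum_eq_iSup_range_actSubMulVar (hmon0 : mon 0 = 1)
    (hmon : ∀ α i, mon (α + single i 1) = mon α * pd i) :
    LinearMap.ker (lsum ℕ mon) = ⨆ i, LinearMap.range (actSubMulVar pd i) := by
  refine le_antisymm (fun x hx => ?_) (iSup_le fun i => ?_)
  · simpa [LinearMap.mem_ker.mp hx] using sub_single_zero_lsum_mem_iSup_range hmon0 hmon x
  · exact LinearMap.range_le_ker_iff.mpr (lsum_comp_actSubMulVar hmon i)

end ActSubMulVar

/-- Let `R` be a commutative ring and `V` an `R`-module with pairwise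
commuting `R`-linear endomorphisms `∂_1, …, ∂_r`.  Let `W := ⊕_{α ∈ ℕ^r} V` (encoded as
`(Fin r →₀ ℕ) →₀ V`, an element `Σ_α m_α w^α` being the finitely supported function
`α ↦ m_α`).  Let `φ : W → V` be the linear map `Σ_α m_α w^α ↦ Σ_α ∂^α(m_α)` where
`∂^α = ∂_1^{α_1} ∘ ⋯ ∘ ∂_r^{α_r}`, and for `1 ≤ i ≤ r` let `D_i : W → W` be the linear map
`Σ_α m_α w^α ↦ Σ_α ∂_i(m_α) w^α - Σ_α m_α w^{α+e_i}`.  Then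
`ker φ = Σ_{i=1}^r image (D_i)`. -/
theorem statement6 (R : Type*) [CommRing R] (V : Type*) [AddCommGroup V] [Module R V]
    (r : ℕ) (pd : Fin r → Module.End R V)
    (hcomm : ∀ i j, pd i * pd j = pd j * pd i) :
    LinearMap.ker
        (Finsupp.lsum ℕ
          (fun α : Fin r →₀ ℕ => (List.ofFn fun i => (pd i) ^ (α i)).prod) :
          ((Fin r →₀ ℕ) →₀ V) →ₗ[R] V)
      = ⨆ i : Fin r,
          LinearMap.range
            ((Finsupp.mapRange.linearMap (pd i) :
                ((Fin r →₀ ℕ) →₀ V) →ₗ[R] ((Fin r →₀ ℕ) →₀ V))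
              - Finsupp.lmapDomain V R (fun α => α + Finsupp.single i 1)) :=
  ker_lsum_eq_iSup_range_actSubMulVar (by simp) (List.prod_ofFn_pow_add_single hcomm)
end

section
/- Let M be a complex vector space with a monodromic structure of rank r: a rank-r Weyl system z_1,…,z_r, ∂_{z_1},…,∂_{z_r} with a decomposition M = ⊕_{χ∈ℚ} M^χ such that z_i(M^χ) ⊆ M^{χ+1}, ∂_{z_i}(M^χ) ⊆ M^{χ−1}, and θ_z − χ + r is locally nilpotent on M^χ, where θ_z := Σ_i z_i∘∂_{z_i}. Let N := ⊕_{α∈ℕ^r, j∈ℕ} M·(w^α⊗∂^j) (formal symbols), with ℂ-linear operators defined on generators m w^α⊗∂^j (m ∈ M) by: z_i ↦ (z_i m) w^α⊗∂^j; ∂_{z_i} ↦ (∂_{z_i} m) w^α⊗∂^j − m w^{α+e_i}⊗∂^{j+1}; w_i ↦ m w^{α+e_i}⊗∂^j; ∂_{w_i} ↦ α_i m w^{α−e_i}⊗∂^j − (z_i m) w^α⊗∂^{j+1}; ∂ ↦ m w^α⊗∂^{j+1}; ξ ↦ Σ_i (z_i m) w^{α+e_i}⊗∂^j − j·m w^α⊗∂^{j−1}.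 Define T := (Σ_i z_i∘∂_{z_i}) + ξ∘∂ + id and S := (Σ_i w_i∘∂_{w_i}) + ξ∘∂ + id as endomorphisms of N, and for β ∈ ℚ, ℓ ∈ ℤ set E_{β,ℓ} := ⊕_{α∈ℕ^r, |α|+ℓ≥0} M^{β+|α|+ℓ}·(w^α⊗∂^{|α|+ℓ}). Then T∘S = S∘T, N = ⊕_{β∈ℚ, ℓ∈ℤ} E_{β,ℓ}, and on E_{β,ℓ} the operator S acts as multiplication by −ℓ while T − (β − r)·id is locally nilpotent. -/
/-!
On a generator `m w^α ⊗ ∂^j` the terms of `Σ zᵢ∂_{zᵢ}` (resp. `Σ wᵢ∂_{wᵢ}`) that raise `α` and `j`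
cancel against those of `ξ∂`, so `T` acts as `single (α, j) ∘ (θ_z - j)` and `S` as the scalar
`|α| - j`. Hence `T` and `S` commute, `S = -ℓ` on the part where `j - |α| = ℓ`, and on
`M^{β+j}` the operator `θ_z - j - (β - r) = θ_z - (β + j - r)` is locally nilpotent. The
decomposition `N = ⊕ E_{β,ℓ}` regroups `N = ⊕_{α,j,χ} M^χ·(w^α ⊗ ∂^j)` along
`(α, j, χ) ↦ (χ - j, j - |α|)`.
-/

open Finsupp Module End

section Eigenspaces

variable {R M N : Type*} [CommRing R] [AddCommGroup M] [Module R M] [AddCommGroup N] [Module R N]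

theorem Module.End.maxGenEigenspace_sub_smul_one (f : End R M) (c μ : R) :
    (f - c • 1).maxGenEigenspace μ = f.maxGenEigenspace (μ + c) := by
  ext x
  simp only [mem_maxGenEigenspace, sub_sub, ← add_smul, add_comm c]

theorem Module.End.map_maxGenEigenspace_le_of_comp_eq {f : End R M} {F : End R N}
    {g : M →ₗ[R] N} (h : F ∘ₗ g = g ∘ₗ f) (μ : R) :
    (f.maxGenEigenspace μ).map g ≤ F.maxGenEigenspace μ := by
  rintro _ ⟨x, hx, rfl⟩
  obtain ⟨k, hk⟩ := (mem_maxGenEigenspace f μ x).mp hx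
  have hshift : (F - μ • 1) ∘ₗ g = g ∘ₗ (f - μ • 1) := by
    simp only [LinearMap.sub_comp, LinearMap.comp_sub, h, LinearMap.smul_comp,
      LinearMap.comp_smul, one_eq_id, LinearMap.id_comp, LinearMap.comp_id]
  refine (mem_maxGenEigenspace F μ _).mpr ⟨k, ?_⟩
  rw [← LinearMap.comp_apply, commute_pow_left_of_commute hshift, LinearMap.comp_apply, hk,
    map_zero]

end Eigenspaces

theorem Finsupp.commute_of_apply_single {R M ι : Type*} [CommSemiring R] [AddCommMonoid M]
    [Module R M]
    {F G : End R (ι →₀ M)} (f : ι → End R M) (c : ι → R)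
    (hF : ∀ p m, F (single p m) = single p (f p m))
    (hG : ∀ p m, G (single p m) = c p • single p m) : Commute F G := by
  refine lhom_ext fun p m => ?_
  simp only [Module.End.mul_apply, hF, hG, map_smul]

theorem iSupIndep_of_projections {ι R N : Type*} [Semiring R] [AddCommMonoid N] [Module R N]
    {p : ι → Submodule R N} (π : ι → N →ₗ[R] N) (h_id : ∀ i, ∀ x ∈ p i, π i x = x)
    (h_zero : ∀ i j, i ≠ j → p i ≤ LinearMap.ker (π j)) : iSupIndep p := by
  refine iSupIndep_def.mpr fun i => Submodule.disjoint_def.mpr fun x hx hx' => ?_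
  have hker : (⨆ (j) (_ : j ≠ i), p j) ≤ LinearMap.ker (π i) :=
    iSup₂_le fun j hj => h_zero j i hj
  rw [← h_id i x hx]
  exact hker hx'

section TwistedGrading

variable {R M ι A L : Type*} [Semiring R] [AddCommMonoid M] [Module R M] [AddGroup A]
  (Mc : A → Submodule R M) (s : ι → A) (lab : ι → L)

/-- `⊕_{lab p = l} M^{a + s p}·p` inside `ι →₀ M`; with `s (α, j) = j` and
`lab (α, j) = j - |α|` this is `E_{a,l}`. -/
noncomputable def twistedPiece (a : A) (l : L) : Submodule R (ι →₀ M) :=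
  ⨆ (p) (_ : lab p = l), (Mc (a + s p)).map (lsingle p)

variable {Mc s lab}

theorem twistedPiece_le_iff {a : A} {l : L} {K : Submodule R (ι →₀ M)} :
    twistedPiece Mc s lab a l ≤ K ↔ ∀ p, lab p = l → ∀ m ∈ Mc (a + s p), single p m ∈ K := by
  simp only [twistedPiece, iSup_le_iff, Submodule.map_le_iff_le_comap]
  rfl

theorem single_mem_twistedPiece {p : ι} {m : M} {a : A} (hm : m ∈ Mc (a + s p)) :
    single p m ∈ twistedPiece Mc s lab a (lab p) :=
  twistedPiece_le_iff.mp le_rfl p rfl m hm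

theorem iSup_twistedPiece_eq_top (h : ⨆ χ, Mc χ = ⊤) :
    ⨆ q : A × L, twistedPiece Mc s lab q.1 q.2 = ⊤ := by
  refine eq_top_iff.mpr ?_
  rw [← iSup_lsingle_range, iSup_le_iff]
  intro p
  rw [LinearMap.range_eq_map, ← h, Submodule.map_iSup, iSup_le_iff]
  intro χ
  refine Submodule.map_le_iff_le_comap.mpr fun m hm => ?_
  refine Submodule.mem_iSup_of_mem (χ - s p, lab p) (single_mem_twistedPiece ?_)
  rwa [sub_add_cancel]

theorem iSupIndep_twistedPiece [DecidableEq A] [DirectSum.Decomposition Mc] :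
    iSupIndep fun q : A × L => twistedPiece Mc s lab q.1 q.2 := by
  classical
  let pr (χ : A) : M →ₗ[R] M := (Mc χ).subtype ∘ₗ DirectSum.component R A (fun χ => Mc χ) χ ∘ₗ
    (DirectSum.decomposeLinearEquiv Mc).toLinearMap
  have pr_apply (χ : A) (m : M) : pr χ m = DirectSum.decompose Mc m χ := rfl
  let π (q : A × L) : End R (ι →₀ M) :=
    lsum ℕ fun p => if lab p = q.2 then lsingle p ∘ₗ pr (q.1 + s p) else 0
  have π_single (q : A × L) (p : ι) (m : M) :
      π q (single p m) = if lab p = q.2 then single p (pr (q.1 + s p) m) else 0 := by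
    simp only [π, lsum_single]
    split_ifs <;> rfl
  refine iSupIndep_of_projections π (fun q x hx => ?_) (fun q q' hne => ?_)
  · have : twistedPiece Mc s lab q.1 q.2 ≤ LinearMap.eqLocus (π q) LinearMap.id :=
      twistedPiece_le_iff.mpr fun p hp m hm => by
        rw [LinearMap.mem_eqLocus, π_single, if_pos hp, pr_apply,
          DirectSum.decompose_of_mem_same Mc hm, LinearMap.id_apply]
    exact this hx
  · refine twistedPiece_le_iff.mpr fun p hp m hm => ?_
    rw [LinearMap.mem_ker, π_single]
    split_ifs with hp'
    · have ha : q.1 + s p ≠ q'.1 + s p := fun h =>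
        hne (Prod.ext (add_right_cancel h) (hp.symm.trans hp'))
      rw [pr_apply, DirectSum.decompose_of_mem_ne Mc hm ha, single_zero]
    · rfl

end TwistedGrading

section TwistedGradingRing

variable {R M ι A L : Type*} [Ring R] [AddCommGroup M] [Module R M] [AddGroup A]
  [DecidableEq A] [DecidableEq L] {Mc : A → Submodule R M} {s : ι → A} {lab : ι → L}

theorem isInternal_twistedPiece (h : DirectSum.IsInternal Mc) :
    DirectSum.IsInternal fun q : A × L => twistedPiece Mc s lab q.1 q.2 := by
  let _ := h.chooseDecomposition
  exact (DirectSum.isInternal_submodule_iff_iSupIndep_and_iSup_eq_top _).mpr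
    ⟨iSupIndep_twistedPiece, iSup_twistedPiece_eq_top h.submodule_iSup_eq_top⟩

end TwistedGradingRing

section GraphEmbedding

variable {r : ℕ} {M : Type*} [AddCommGroup M] [Module ℂ M] {z : Fin r → End ℂ M}
  {P Xi : End ℂ (((Fin r →₀ ℕ) × ℕ) →₀ M)}

theorem xi_mul_p_apply_single
    (hP : ∀ (α : Fin r →₀ ℕ) (j : ℕ) (m : M), P (single (α, j) m) = single (α, j + 1) m)
    (hXi : ∀ (α : Fin r →₀ ℕ) (j : ℕ) (m : M), Xi (single (α, j) m) =
      (∑ i, single (α + single i 1, j) (z i m)) - (j : ℂ) • single (α, j - 1) m)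
    (α : Fin r →₀ ℕ) (j : ℕ) (m : M) :
    (Xi * P) (single (α, j) m) =
      (∑ i, single (α + single i 1, j + 1) (z i m)) - ((j : ℂ) + 1) • single (α, j) m := by
  rw [End.mul_apply, hP, hXi, Nat.add_sub_cancel, Nat.cast_succ]

theorem sum_z_mul_dz_apply_single {dz : Fin r → End ℂ M}
    {Z Dz : Fin r → End ℂ (((Fin r →₀ ℕ) × ℕ) →₀ M)}
    (hZ : ∀ (i : Fin r) (α : Fin r →₀ ℕ) (j : ℕ) (m : M),
      Z i (single (α, j) m) = single (α, j) (z i m))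
    (hDz : ∀ (i : Fin r) (α : Fin r →₀ ℕ) (j : ℕ) (m : M),
      Dz i (single (α, j) m) = single (α, j) (dz i m) - single (α + single i 1, j + 1) m)
    (α : Fin r →₀ ℕ) (j : ℕ) (m : M) :
    (∑ i, Z i * Dz i) (single (α, j) m) =
      single (α, j) ((∑ i, z i * dz i) m) - ∑ i, single (α + single i 1, j + 1) (z i m) := by
  simp only [LinearMap.sum_apply, End.mul_apply, hDz, map_sub, hZ, Finset.sum_sub_distrib,
    single_finsetSum]

theorem sum_w_mul_dw_apply_single {Wo Dw : Fin r → End ℂ (((Fin r →₀ ℕ) × ℕ) →₀ M)}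
    (hWo : ∀ (i : Fin r) (α : Fin r →₀ ℕ) (j : ℕ) (m : M),
      Wo i (single (α, j) m) = single (α + single i 1, j) m)
    (hDw : ∀ (i : Fin r) (α : Fin r →₀ ℕ) (j : ℕ) (m : M),
      Dw i (single (α, j) m) =
        (α i : ℂ) • single (α - single i 1, j) m - single (α, j + 1) (z i m))
    (α : Fin r →₀ ℕ) (j : ℕ) (m : M) :
    (∑ i, Wo i * Dw i) (single (α, j) m) =
      (α.degree : ℂ) • single (α, j) m - ∑ i, single (α + single i 1, j + 1) (z i m) := by
  have h_summand (i : Fin r) : (Wo i * Dw i) (single (α, j) m) =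
      (α i : ℂ) • single (α, j) m - single (α + single i 1, j + 1) (z i m) := by
    rw [End.mul_apply, hDw, map_sub, map_smul, hWo, hWo]
    rcases Nat.eq_zero_or_pos (α i) with h | h
    · simp [h]
    · rw [tsub_add_cancel_of_le (single_le_iff.mpr h)]
  simp only [LinearMap.sum_apply, h_summand, Finset.sum_sub_distrib, ← Finset.sum_smul,
    degree_eq_sum, Nat.cast_sum]

theorem sum_z_mul_dz_add_xi_mul_p_add_one_apply_single {dz : Fin r → End ℂ M}
    {Z Dz : Fin r → End ℂ (((Fin r →₀ ℕ) × ℕ) →₀ M)}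
    (hZ : ∀ (i : Fin r) (α : Fin r →₀ ℕ) (j : ℕ) (m : M),
      Z i (single (α, j) m) = single (α, j) (z i m))
    (hDz : ∀ (i : Fin r) (α : Fin r →₀ ℕ) (j : ℕ) (m : M),
      Dz i (single (α, j) m) = single (α, j) (dz i m) - single (α + single i 1, j + 1) m)
    (hP : ∀ (α : Fin r →₀ ℕ) (j : ℕ) (m : M), P (single (α, j) m) = single (α, j + 1) m)
    (hXi : ∀ (α : Fin r →₀ ℕ) (j : ℕ) (m : M), Xi (single (α, j) m) =
      (∑ i, single (α + single i 1, j) (z i m)) - (j : ℂ) • single (α, j - 1) m)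
    (α : Fin r →₀ ℕ) (j : ℕ) (m : M) :
    ((∑ i, Z i * Dz i) + Xi * P + 1) (single (α, j) m) =
      single (α, j) (((∑ i, z i * dz i) - (j : ℂ) • 1) m) := by
  rw [LinearMap.add_apply, LinearMap.add_apply, sum_z_mul_dz_apply_single hZ hDz,
    xi_mul_p_apply_single hP hXi, one_apply, LinearMap.sub_apply, single_sub,
    LinearMap.smul_apply, one_apply, ← smul_single]
  module

theorem sum_w_mul_dw_add_xi_mul_p_add_one_apply_single
    {Wo Dw : Fin r → End ℂ (((Fin r →₀ ℕ) × ℕ) →₀ M)}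
    (hWo : ∀ (i : Fin r) (α : Fin r →₀ ℕ) (j : ℕ) (m : M),
      Wo i (single (α, j) m) = single (α + single i 1, j) m)
    (hDw : ∀ (i : Fin r) (α : Fin r →₀ ℕ) (j : ℕ) (m : M),
      Dw i (single (α, j) m) =
        (α i : ℂ) • single (α - single i 1, j) m - single (α, j + 1) (z i m))
    (hP : ∀ (α : Fin r →₀ ℕ) (j : ℕ) (m : M), P (single (α, j) m) = single (α, j + 1) m)
    (hXi : ∀ (α : Fin r →₀ ℕ) (j : ℕ) (m : M), Xi (single (α, j) m) =
      (∑ i, single (α + single i 1, j) (z i m)) - (j : ℂ) • single (α, j - 1) m)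
    (α : Fin r →₀ ℕ) (j : ℕ) (m : M) :
    ((∑ i, Wo i * Dw i) + Xi * P + 1) (single (α, j) m) =
      ((α.degree : ℂ) - j) • single (α, j) m := by
  rw [LinearMap.add_apply, LinearMap.add_apply, sum_w_mul_dw_apply_single hWo hDw,
    xi_mul_p_apply_single hP hXi, one_apply]
  module

end GraphEmbedding

theorem statement9_general (r : ℕ)
    (M : Type*) [AddCommGroup M] [Module ℂ M]
    (z dz : Fin r → Module.End ℂ M)
    (Mc : ℚ → Submodule ℂ M)
    (hint : DirectSum.IsInternal Mc)
    (hMnil : ∀ (χ : ℚ), ∀ m ∈ Mc χ, ∃ k : ℕ,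
      ((((∑ i, z i * dz i) - ((χ : ℂ) - (r : ℂ)) • 1) ^ k) m = 0))
    -- the operators on `N = ⊕_{α,j} M·(w^α ⊗ ∂^j)`
    (Z Dz Wo Dw : Fin r → Module.End ℂ (((Fin r →₀ ℕ) × ℕ) →₀ M))
    (P Xi : Module.End ℂ (((Fin r →₀ ℕ) × ℕ) →₀ M))
    (hZ : ∀ (i : Fin r) (α : Fin r →₀ ℕ) (j : ℕ) (m : M),
      Z i (Finsupp.single (α, j) m) = Finsupp.single (α, j) (z i m))
    (hDz : ∀ (i : Fin r) (α : Fin r →₀ ℕ) (j : ℕ) (m : M),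
      Dz i (Finsupp.single (α, j) m) =
        Finsupp.single (α, j) (dz i m) -
          Finsupp.single (α + Finsupp.single i 1, j + 1) m)
    (hWo : ∀ (i : Fin r) (α : Fin r →₀ ℕ) (j : ℕ) (m : M),
      Wo i (Finsupp.single (α, j) m) = Finsupp.single (α + Finsupp.single i 1, j) m)
    (hDw : ∀ (i : Fin r) (α : Fin r →₀ ℕ) (j : ℕ) (m : M),
      Dw i (Finsupp.single (α, j) m) =
        (α i : ℂ) • Finsupp.single (α - Finsupp.single i 1, j) m -
          Finsupp.single (α, j + 1) (z i m))
    (hP : ∀ (α : Fin r →₀ ℕ) (j : ℕ) (m : M),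
      P (Finsupp.single (α, j) m) = Finsupp.single (α, j + 1) m)
    (hXi : ∀ (α : Fin r →₀ ℕ) (j : ℕ) (m : M),
      Xi (Finsupp.single (α, j) m) =
        (∑ i, Finsupp.single (α + Finsupp.single i 1, j) (z i m)) -
          (j : ℂ) • Finsupp.single (α, j - 1) m)
    (T S : Module.End ℂ (((Fin r →₀ ℕ) × ℕ) →₀ M))
    (hT : T = (∑ i, Z i * Dz i) + Xi * P + 1)
    (hS : S = (∑ i, Wo i * Dw i) + Xi * P + 1)
    (E : ℚ → ℤ → Submodule ℂ (((Fin r →₀ ℕ) × ℕ) →₀ M))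
    (hE : ∀ (β : ℚ) (ℓ : ℤ), E β ℓ =
      ⨆ (α : Fin r →₀ ℕ) (j : ℕ) (_ : (j : ℤ) = ((α.sum fun _ n => n : ℕ) : ℤ) + ℓ),
        (Mc (β + j)).map (Finsupp.lsingle (α, j))) :
    Commute T S ∧
    DirectSum.IsInternal (fun p : ℚ × ℤ => E p.1 p.2) ∧
    (∀ (β : ℚ) (ℓ : ℤ), ∀ x ∈ E β ℓ, S x = (-(ℓ : ℂ)) • x) ∧
    (∀ (β : ℚ) (ℓ : ℤ), ∀ x ∈ E β ℓ, ∃ k : ℕ,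
      (((T - ((β : ℂ) - (r : ℂ)) • 1) ^ k) x = 0)) := by
  subst hT hS
  have hT := sum_z_mul_dz_add_xi_mul_p_add_one_apply_single hZ hDz hP hXi
  have hS := sum_w_mul_dw_add_xi_mul_p_add_one_apply_single hWo hDw hP hXi
  set θ := ∑ i, z i * dz i
  have hE' (β : ℚ) (ℓ : ℤ) : E β ℓ = twistedPiece Mc (fun p => (p.2 : ℚ))
      (fun p => (p.2 : ℤ) - p.1.degree) β ℓ := by
    simp only [hE, twistedPiece, iSup_prod, sub_eq_iff_eq_add', degree_apply, Finsupp.sum]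
  refine ⟨commute_of_apply_single (fun p => θ - (p.2 : ℂ) • 1) (fun p => p.1.degree - p.2)
    (fun p => hT p.1 p.2) (fun p => hS p.1 p.2), ?_, fun β ℓ x hx => ?_, fun β ℓ x hx => ?_⟩
  · simpa only [hE'] using isInternal_twistedPiece hint
  · refine mem_eigenspace_iff.mp (twistedPiece_le_iff.mpr (fun p hp m _ => ?_) ((hE' β ℓ) ▸ hx))
    rw [mem_eigenspace_iff, hS, ← hp]
    congr 1
    push_cast
    ring
  · refine (mem_maxGenEigenspace _ _ _).mp
      (twistedPiece_le_iff.mpr (fun ⟨α, j⟩ _ m hm => ?_) ((hE' β ℓ) ▸ hx))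
    have h_intertwine : ((∑ i, Z i * Dz i) + Xi * P + 1) ∘ₗ lsingle (α, j) =
        lsingle (α, j) ∘ₗ (θ - (j : ℂ) • 1) :=
      LinearMap.ext (hT α j)
    refine map_maxGenEigenspace_le_of_comp_eq h_intertwine _ ⟨m, ?_, rfl⟩
    rw [SetLike.mem_coe, maxGenEigenspace_sub_smul_one, mem_maxGenEigenspace]
    have h_shift : (β : ℂ) - r + j = ((β + j : ℚ) : ℂ) - r := by push_cast; ring
    rw [h_shift]
    exact hMnil _ m hm

/-- Let `M` be a complex vector space with a monodromic structure of
rank `r` (Weyl system `z_i, ∂_{z_i}`, decomposition `M = ⊕_χ M^χ`).  Let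
`N := ⊕_{α ∈ ℕ^r, j ∈ ℕ} M·(w^α ⊗ ∂^j)` (encoded as `((Fin r →₀ ℕ) × ℕ) →₀ M`, the
generator `m w^α ⊗ ∂^j` being `Finsupp.single (α, j) m`) with the operators
`z_i, ∂_{z_i}, w_i, ∂_{w_i}, ∂, ξ` given on generators as listed.  Let
`T := Σᵢ zᵢ∘∂_{z_i} + ξ∘∂ + id` and `S := Σᵢ wᵢ∘∂_{w_i} + ξ∘∂ + id`, and for `β ∈ ℚ`,
`ℓ ∈ ℤ` let `E_{β,ℓ} := ⊕_{α, |α|+ℓ ≥ 0} M^{β+|α|+ℓ}·(w^α ⊗ ∂^{|α|+ℓ})`.  Then `T` and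
`S` commute, `N = ⊕_{β,ℓ} E_{β,ℓ}`, and on `E_{β,ℓ}` the operator `S` acts as
multiplication by `-ℓ` while `T - (β - r)·id` is locally nilpotent. -/
theorem statement9 (r : ℕ) (hr : 1 ≤ r)
    (M : Type*) [AddCommGroup M] [Module ℂ M]
    (z dz : Fin r → Module.End ℂ M)
    (hzz : ∀ i j, z i * z j = z j * z i)
    (hdzdz : ∀ i j, dz i * dz j = dz j * dz i)
    (hdzz : ∀ i j, dz i * z j - z j * dz i = if i = j then 1 else 0)
    (Mc : ℚ → Submodule ℂ M)
    (hint : DirectSum.IsInternal Mc)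
    (hMz : ∀ (i : Fin r) (χ : ℚ), ∀ m ∈ Mc χ, z i m ∈ Mc (χ + 1))
    (hMdz : ∀ (i : Fin r) (χ : ℚ), ∀ m ∈ Mc χ, dz i m ∈ Mc (χ - 1))
    (hMnil : ∀ (χ : ℚ), ∀ m ∈ Mc χ, ∃ k : ℕ,
      ((((∑ i, z i * dz i) - ((χ : ℂ) - (r : ℂ)) • 1) ^ k) m = 0))
    -- the operators on `N = ⊕_{α,j} M·(w^α ⊗ ∂^j)`
    (Z Dz Wo Dw : Fin r → Module.End ℂ (((Fin r →₀ ℕ) × ℕ) →₀ M))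
    (P Xi : Module.End ℂ (((Fin r →₀ ℕ) × ℕ) →₀ M))
    (hZ : ∀ (i : Fin r) (α : Fin r →₀ ℕ) (j : ℕ) (m : M),
      Z i (Finsupp.single (α, j) m) = Finsupp.single (α, j) (z i m))
    (hDz : ∀ (i : Fin r) (α : Fin r →₀ ℕ) (j : ℕ) (m : M),
      Dz i (Finsupp.single (α, j) m) =
        Finsupp.single (α, j) (dz i m) -
          Finsupp.single (α + Finsupp.single i 1, j + 1) m)
    (hWo : ∀ (i : Fin r) (α : Fin r →₀ ℕ) (j : ℕ) (m : M),
      Wo i (Finsupp.single (α, j) m) = Finsupp.single (α + Finsupp.single i 1, j) m)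
    (hDw : ∀ (i : Fin r) (α : Fin r →₀ ℕ) (j : ℕ) (m : M),
      Dw i (Finsupp.single (α, j) m) =
        (α i : ℂ) • Finsupp.single (α - Finsupp.single i 1, j) m -
          Finsupp.single (α, j + 1) (z i m))
    (hP : ∀ (α : Fin r →₀ ℕ) (j : ℕ) (m : M),
      P (Finsupp.single (α, j) m) = Finsupp.single (α, j + 1) m)
    (hXi : ∀ (α : Fin r →₀ ℕ) (j : ℕ) (m : M),
      Xi (Finsupp.single (α, j) m) =
        (∑ i, Finsupp.single (α + Finsupp.single i 1, j) (z i m)) -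
          (j : ℂ) • Finsupp.single (α, j - 1) m)
    (T S : Module.End ℂ (((Fin r →₀ ℕ) × ℕ) →₀ M))
    (hT : T = (∑ i, Z i * Dz i) + Xi * P + 1)
    (hS : S = (∑ i, Wo i * Dw i) + Xi * P + 1)
    (E : ℚ → ℤ → Submodule ℂ (((Fin r →₀ ℕ) × ℕ) →₀ M))
    (hE : ∀ (β : ℚ) (ℓ : ℤ), E β ℓ =
      ⨆ (α : Fin r →₀ ℕ) (j : ℕ) (_ : (j : ℤ) = ((α.sum fun _ n => n : ℕ) : ℤ) + ℓ),
        (Mc (β + j)).map (Finsupp.lsingle (α, j))) :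
    Commute T S ∧
    DirectSum.IsInternal (fun p : ℚ × ℤ => E p.1 p.2) ∧
    (∀ (β : ℚ) (ℓ : ℤ), ∀ x ∈ E β ℓ, S x = (-(ℓ : ℂ)) • x) ∧
    (∀ (β : ℚ) (ℓ : ℤ), ∀ x ∈ E β ℓ, ∃ k : ℕ,
      (((T - ((β : ℂ) - (r : ℂ)) • 1) ^ k) x = 0)) :=
  statement9_general r M z dz Mc hint hMnil Z Dz Wo Dw P Xi hZ hDz hWo hDw hP hXi T S hT hS E hE
end

section
/- Let M be a complex vector space equipped with a rank-r Weyl system t_1,…,t_r, ∂_1,…,∂_r and an abstract V-filtration (V^χ)_{χ∈ℚ} that is exhaustive (⋃_χ V^χ = M) and discrete (there is a positive integer e such that for each k ∈ ℤ the subspace V^χ is constant for χ ∈ (k/e, (k+1)/e]). If m ∈ M satisfies t_i(m) = 0 for all i = 1,…,r, then m ∈ V^0. -/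
noncomputable section

/-- `V^{>χ} := ⋃_{β > χ} V^β` (a union of a directed family of subspaces, hence the sup). -/
def Vgt {M : Type*} [AddCommGroup M] [Module ℂ M] (V : ℚ → Submodule ℂ M) (χ : ℚ) :
    Submodule ℂ M :=
  ⨆ β > χ, V β

/-- Let `M` be a complex vector space with a rank-`r` Weyl system
`t_1, …, t_r, ∂_1, …, ∂_r` and an exhaustive, discrete abstract V-filtration `(V^χ)_χ`.
If `m ∈ M` satisfies `tᵢ(m) = 0` for all `i = 1, …, r`, then `m ∈ V^0`. -/
theorem statement12 (r : ℕ) (hr : 1 ≤ r)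
    (M : Type*) [AddCommGroup M] [Module ℂ M]
    (t d : Fin r → Module.End ℂ M)
    (htt : ∀ i j, t i * t j = t j * t i)
    (hdd : ∀ i j, d i * d j = d j * d i)
    (hdt : ∀ i j, d i * t j - t j * d i = if i = j then 1 else 0)
    (θ : Module.End ℂ M) (hθ : θ = ∑ i, t i * d i)
    (V : ℚ → Submodule ℂ M)
    (hmono : ∀ ⦃χ χ' : ℚ⦄, χ ≤ χ' → V χ' ≤ V χ)
    (hVt : ∀ (i : Fin r) (χ : ℚ), ∀ m ∈ V χ, t i m ∈ V (χ + 1))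
    (hVd : ∀ (i : Fin r) (χ : ℚ), ∀ m ∈ V χ, d i m ∈ V (χ - 1))
    (hVnil : ∀ (χ : ℚ), ∀ m ∈ V χ, ∃ k : ℕ, 1 ≤ k ∧
      (((θ - ((χ : ℂ) - (r : ℂ)) • 1) ^ k) m ∈ Vgt V χ))
    (hVexh : (⨆ χ : ℚ, V χ) = ⊤)
    (hVdisc : ∃ e : ℕ, 0 < e ∧ ∀ k : ℤ, ∀ χ χ' : ℚ,
      χ ∈ Set.Ioc ((k : ℚ) / e) ((k + 1 : ℚ) / e) →
      χ' ∈ Set.Ioc ((k : ℚ) / e) ((k + 1 : ℚ) / e) → V χ = V χ')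
    (m : M) (hm : ∀ i : Fin r, t i m = 0) :
    m ∈ V 0 := by
  classical
  obtain ⟨e, he0, hdisc⟩ := hVdisc
  have heQ : (0 : ℚ) < (e : ℚ) := by exact_mod_cast he0
  -- directedness of the family V
  have hdir : Directed (· ≤ ·) V := fun a b =>
    ⟨min a b, hmono (min_le_left a b), hmono (min_le_right a b)⟩
  -- m lies in some V χ
  obtain ⟨χ₀, hχ₀⟩ : ∃ χ, m ∈ V χ := by
    have h : m ∈ (⨆ χ, V χ) := hVexh ▸ Submodule.mem_top
    exact (Submodule.mem_iSup_of_directed V hdir).mp h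
  -- θ m = -(r : ℂ) • m
  have htdm : ∀ i : Fin r, t i (d i m) = -m := by
    intro i
    have h0 : d i * t i - t i * d i = 1 := by simpa using hdt i i
    have h := congrArg (fun f : Module.End ℂ M => f m) h0
    simp only [LinearMap.sub_apply, Module.End.mul_apply, Module.End.one_apply] at h
    rw [hm i, map_zero, zero_sub] at h
    exact neg_eq_iff_eq_neg.mp h
  have hθm : θ m = (-(r : ℂ)) • m := by
    rw [hθ, LinearMap.sum_apply]
    simp only [Module.End.mul_apply, htdm]
    simp [neg_smul, Nat.cast_smul_eq_nsmul]
  -- key step: if χ ≠ 0 and m ∈ V χ then m ∈ V β for some β > χ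
  have hstep : ∀ χ : ℚ, χ ≠ 0 → m ∈ V χ → ∃ β, χ < β ∧ m ∈ V β := by
    intro χ hχ hmV
    obtain ⟨k, hk1, hk⟩ := hVnil χ m hmV
    set A : Module.End ℂ M := θ - ((χ : ℂ) - (r : ℂ)) • 1 with hA
    have hAm : A m = (-(χ : ℂ)) • m := by
      rw [hA, LinearMap.sub_apply, LinearMap.smul_apply, Module.End.one_apply, hθm,
        ← sub_smul]
      congr 1
      ring
    have hpow : ∀ n : ℕ, (A ^ n) m = ((-(χ : ℂ)) ^ n) • m := by
      intro n
      induction n with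
      | zero => simp
      | succ n ih =>
        rw [pow_succ, Module.End.mul_apply, hAm, map_smul, ih, smul_smul, ← pow_succ']
    rw [hpow k] at hk
    have hc : ((-(χ : ℂ)) ^ k) ≠ 0 := by
      apply pow_ne_zero
      simpa using (Rat.cast_ne_zero (α := ℂ)).mpr hχ
    have hmem : m ∈ Vgt V χ := by
      have h2 := Submodule.smul_mem (Vgt V χ) (((-(χ : ℂ)) ^ k)⁻¹) hk
      rwa [smul_smul, inv_mul_cancel₀ hc, one_smul] at h2
    -- extract a concrete β from the directed sup
    have heq : Vgt V χ = ⨆ s : {β : ℚ // χ < β}, V s.1 := by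
      rw [Vgt, iSup_subtype]
    rw [heq] at hmem
    have hdir' : Directed (· ≤ ·) (fun s : {β : ℚ // χ < β} => V s.1) := by
      intro a b
      exact ⟨⟨min a.1 b.1, lt_min a.2 b.2⟩, hmono (min_le_left _ _),
        hmono (min_le_right _ _)⟩
    haveI : Nonempty {β : ℚ // χ < β} := ⟨⟨χ + 1, lt_add_one χ⟩⟩
    obtain ⟨s, hs⟩ := (Submodule.mem_iSup_of_directed _ hdir').mp hmem
    exact ⟨s.1, s.2, hs⟩
  -- snap: membership at χ gives membership on the grid point ⌈χ e⌉ / e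
  have hsnap : ∀ χ : ℚ, m ∈ V χ → m ∈ V ((⌈χ * e⌉ : ℤ) / (e : ℚ)) := by
    intro χ hmV
    have h1 : ((⌈χ * e⌉ - 1 : ℤ) : ℚ) / e < χ := by
      rw [div_lt_iff₀ heQ]
      push_cast
      have := Int.ceil_lt_add_one (χ * e)
      linarith
    have h2 : χ ≤ ((⌈χ * e⌉ : ℤ) : ℚ) / e := by
      rw [le_div_iff₀ heQ]
      exact Int.le_ceil (χ * e)
    have hkk : ((⌈χ * e⌉ - 1 : ℤ) : ℚ) + 1 = ((⌈χ * e⌉ : ℤ) : ℚ) := by push_cast; ring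
    have h3 : ((⌈χ * e⌉ - 1 : ℤ) : ℚ) / e < ((⌈χ * e⌉ : ℤ) : ℚ) / e := by
      apply div_lt_div_of_pos_right ?_ heQ
      push_cast; linarith
    have heqV := hdisc (⌈χ * e⌉ - 1) χ (((⌈χ * e⌉ : ℤ) : ℚ) / e)
      ⟨h1, by rw [hkk]; exact h2⟩ ⟨h3, by rw [hkk]⟩
    exact heqV ▸ hmV
  -- climb to 0 by induction
  have main : ∀ n : ℕ, ∀ k : ℤ, k ≤ 0 → -k ≤ (n : ℤ) → m ∈ V ((k : ℚ) / e) → m ∈ V 0 := by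
    intro n
    induction n with
    | zero =>
      intro k hk0 hkn hmem
      have hk : k = 0 := by omega
      subst hk
      simpa using hmem
    | succ n ih =>
      intro k hk0 hkn hmem
      rcases eq_or_lt_of_le hk0 with h0 | hlt
      · subst h0
        simpa using hmem
      · have hne : ((k : ℚ) / e) ≠ 0 := by
          have hneg : (k : ℚ) / e < 0 :=
            div_neg_of_neg_of_pos (by exact_mod_cast hlt) heQ
          exact ne_of_lt hneg
        obtain ⟨β, hβgt, hβ⟩ := hstep _ hne hmem
        have hsnapβ := hsnap β hβ
        set k' : ℤ := ⌈β * e⌉ with hk'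
        have hk'gt : k < k' := by
          rw [hk', Int.lt_ceil]
          rw [div_lt_iff₀ heQ] at hβgt
          linarith
        by_cases h0' : k' ≤ 0
        · exact ih k' h0' (by omega) hsnapβ
        · have hk'pos : (0 : ℚ) ≤ (k' : ℚ) := by exact_mod_cast (le_of_lt (lt_of_not_ge h0'))
          exact hmono (div_nonneg hk'pos heQ.le) hsnapβ
  -- conclude
  have hstart := hsnap χ₀ hχ₀
  set k₀ : ℤ := ⌈χ₀ * e⌉ with hk₀
  by_cases h0 : k₀ ≤ 0
  · exact main (-k₀).toNat k₀ h0 (by omega) hstart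
  · have hk₀pos : (0 : ℚ) ≤ (k₀ : ℚ) := by exact_mod_cast (le_of_lt (lt_of_not_ge h0))
    exact hmono (div_nonneg hk₀pos heQ.le) hstart
end
end

section
/- Let R be a ring and let 0 → A → B → C → 0 be a short exact sequence of cochain complexes of R-modules. Let (F_iB)_{i∈ℤ} be an increasing family of subcomplexes of B, and set F_iA := A ∩ F_iB (a subcomplex of A) and F_iC := the image of F_iB in C. For X ∈ {A, B, C} write F_iH^ℓ(X) for the image of H^ℓ(F_iX) → H^ℓ(X). Assume: (i) for all i ∈ ℤ and ℓ ∈ ℤ, the natural maps H^ℓ(F_iA) → H^ℓ(A) and H^ℓ(F_iC) → H^ℓ(C) are injective; (ii) for all i ∈ ℤ and ℓ ∈ ℤ, the connecting homomorphism δ : H^{ℓ−1}(C) → H^ℓ(A) is strictly compatible with F, i.e. δ(H^{ℓ−1}(C)) ∩ F_iH^ℓ(A) = δ(F_iH^{ℓ−1}(C)). Then for all i ∈ ℤ and ℓ ∈ ℤ the natural map H^ℓ(F_iB) → H^ℓ(B) is injective. -/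
noncomputable section

/-- Let `0 → A → B → C → 0` be a short exact sequence of cochain
complexes of `R`-modules, `(F_iB)_i` an increasing family of subcomplexes of `B`, and
set `F_iA := A ∩ F_iB` (i.e. the preimage under `f`) and `F_iC := ` the image of `F_iB`
in `C`.  Assume
(i) for all `i, ℓ` the maps `H^ℓ(F_iA) → H^ℓ(A)` and `H^ℓ(F_iC) → H^ℓ(C)` are injective
    (elementwise: a cocycle of `F_iX` which is a coboundary in `X` is a coboundary of an
    element of `F_iX`), and
(ii) the connecting homomorphisms `δ : H^ℓ(C) → H^{ℓ+1}(A)` are strictly compatible with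
    `F`, i.e. `δ(H^ℓ(C)) ∩ F_iH^{ℓ+1}(A) = δ(F_iH^ℓ(C))` (elementwise, via
    representatives: `δ[c] = [a]` is witnessed by some `b` with `g b = c` and
    `f a = dB b`, `F_iH(X)` is the set of classes admitting a cocycle representative in
    `F_iX`, and equality of classes means the difference is a coboundary).
Then for all `i, ℓ` the natural map `H^ℓ(F_iB) → H^ℓ(B)` is injective (elementwise as in
(i)). -/
theorem statement13 (R : Type*) [Ring R]
    (A B C : ℤ → Type*)
    [∀ ℓ, AddCommGroup (A ℓ)] [∀ ℓ, Module R (A ℓ)]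
    [∀ ℓ, AddCommGroup (B ℓ)] [∀ ℓ, Module R (B ℓ)]
    [∀ ℓ, AddCommGroup (C ℓ)] [∀ ℓ, Module R (C ℓ)]
    (dA : ∀ ℓ : ℤ, A ℓ →ₗ[R] A (ℓ+1))
    (dB : ∀ ℓ : ℤ, B ℓ →ₗ[R] B (ℓ+1))
    (dC : ∀ ℓ : ℤ, C ℓ →ₗ[R] C (ℓ+1))
    (hdA : ∀ ℓ, (dA (ℓ+1)).comp (dA ℓ) = 0)
    (hdB : ∀ ℓ, (dB (ℓ+1)).comp (dB ℓ) = 0)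
    (hdC : ∀ ℓ, (dC (ℓ+1)).comp (dC ℓ) = 0)
    (f : ∀ ℓ : ℤ, A ℓ →ₗ[R] B ℓ) (g : ∀ ℓ : ℤ, B ℓ →ₗ[R] C ℓ)
    (hf : ∀ ℓ, (f (ℓ+1)).comp (dA ℓ) = (dB ℓ).comp (f ℓ))
    (hg : ∀ ℓ, (g (ℓ+1)).comp (dB ℓ) = (dC ℓ).comp (g ℓ))
    (hfinj : ∀ ℓ, Function.Injective (f ℓ))
    (hgsurj : ∀ ℓ, Function.Surjective (g ℓ))
    (hfg : ∀ ℓ, LinearMap.ker (g ℓ) = LinearMap.range (f ℓ))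
    (FB : ℤ → ∀ ℓ : ℤ, Submodule R (B ℓ))
    (hFBmono : ∀ ⦃i i' : ℤ⦄, i ≤ i' → ∀ ℓ, FB i ℓ ≤ FB i' ℓ)
    (hFBd : ∀ i ℓ, ∀ x ∈ FB i ℓ, dB ℓ x ∈ FB i (ℓ+1))
    (FA : ℤ → ∀ ℓ : ℤ, Submodule R (A ℓ))
    (hFA : ∀ i ℓ, FA i ℓ = (FB i ℓ).comap (f ℓ))
    (FC : ℤ → ∀ ℓ : ℤ, Submodule R (C ℓ))
    (hFC : ∀ i ℓ, FC i ℓ = (FB i ℓ).map (g ℓ))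
    -- (i): `H^{ℓ+1}(F_iA) → H^{ℓ+1}(A)` and `H^{ℓ+1}(F_iC) → H^{ℓ+1}(C)` are injective
    (hinjA : ∀ (i ℓ : ℤ), ∀ x : A (ℓ+1), x ∈ FA i (ℓ+1) → (∃ y : A ℓ, dA ℓ y = x) →
      ∃ y ∈ FA i ℓ, dA ℓ y = x)
    (hinjC : ∀ (i ℓ : ℤ), ∀ x : C (ℓ+1), x ∈ FC i (ℓ+1) → (∃ y : C ℓ, dC ℓ y = x) →
      ∃ y ∈ FC i ℓ, dC ℓ y = x)
    -- (ii): `δ(H^ℓ(C)) ∩ F_iH^{ℓ+1}(A) ⊆ δ(F_iH^ℓ(C))` …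
    (hstrict₁ : ∀ (i ℓ : ℤ) (c : C ℓ), dC ℓ c = 0 → ∀ b : B ℓ, g ℓ b = c →
      ∀ a : A (ℓ+1), f (ℓ+1) a = dB ℓ b →
      (∃ a' ∈ FA i (ℓ+1), dA (ℓ+1) a' = 0 ∧ ∃ y : A ℓ, dA ℓ y = a - a') →
      ∃ c' ∈ FC i ℓ, dC ℓ c' = 0 ∧ ∃ b' : B ℓ, g ℓ b' = c' ∧
        ∃ a'' : A (ℓ+1), f (ℓ+1) a'' = dB ℓ b' ∧ ∃ y : A ℓ, dA ℓ y = a - a'')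
    -- … and `δ(F_iH^ℓ(C)) ⊆ δ(H^ℓ(C)) ∩ F_iH^{ℓ+1}(A)`
    (hstrict₂ : ∀ (i ℓ : ℤ) (c' : C ℓ), c' ∈ FC i ℓ → dC ℓ c' = 0 →
      ∀ b' : B ℓ, g ℓ b' = c' → ∀ a'' : A (ℓ+1), f (ℓ+1) a'' = dB ℓ b' →
      ∃ a' ∈ FA i (ℓ+1), dA (ℓ+1) a' = 0 ∧ ∃ y : A ℓ, dA ℓ y = a'' - a') :
    -- conclusion: `H^{ℓ+1}(F_iB) → H^{ℓ+1}(B)` is injective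
    ∀ (i ℓ : ℤ), ∀ x : B (ℓ+1), x ∈ FB i (ℓ+1) → (∃ y : B ℓ, dB ℓ y = x) →
      ∃ y ∈ FB i ℓ, dB ℓ y = x := by
  intro i ℓ x hx ⟨y, hy⟩
  have hgd : ∀ ℓ (b : B ℓ), g (ℓ+1) (dB ℓ b) = dC ℓ (g ℓ b) :=
    fun ℓ b => LinearMap.congr_fun (hg ℓ) b
  have hfd : ∀ ℓ (a : A ℓ), f (ℓ+1) (dA ℓ a) = dB ℓ (f ℓ a) :=
    fun ℓ a => LinearMap.congr_fun (hf ℓ) a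
  have hdd : ∀ ℓ (b : B ℓ), dB (ℓ+1) (dB ℓ b) = 0 :=
    fun ℓ b => LinearMap.congr_fun (hdB ℓ) b
  have hgf : ∀ ℓ (a : A ℓ), g ℓ (f ℓ a) = 0 := by
    intro ℓ a
    have : f ℓ a ∈ LinearMap.ker (g ℓ) := by rw [hfg]; exact ⟨a, rfl⟩
    exact this
  -- dB x = 0
  have hdx : dB (ℓ+1) x = 0 := by
    rw [← hy]; exact hdd ℓ y
  -- g x lies in F_i C and is a coboundary
  have hgxF : g (ℓ+1) x ∈ FC i (ℓ+1) := by rw [hFC]; exact ⟨x, hx, rfl⟩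
  have hgxb : ∃ c : C ℓ, dC ℓ c = g (ℓ+1) x := by
    refine ⟨g ℓ y, ?_⟩
    rw [← hy]; exact (hgd ℓ y).symm
  obtain ⟨c', hc'F, hc'd⟩ := hinjC i ℓ (g (ℓ+1) x) hgxF hgxb
  -- lift c' to b' ∈ F_i B
  obtain ⟨b', hb'F, hgb'⟩ : ∃ b' ∈ FB i ℓ, g ℓ b' = c' := by
    have := hc'F; rw [hFC] at this; obtain ⟨b', h1, h2⟩ := this; exact ⟨b', h1, h2⟩
  -- x - dB b' ∈ ker g = range f
  have hker : x - dB ℓ b' ∈ LinearMap.ker (g (ℓ+1)) := by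
    simp only [LinearMap.mem_ker, map_sub]
    rw [hgd ℓ b', hgb', hc'd, sub_self]
  rw [hfg] at hker
  obtain ⟨a, hfa⟩ := hker
  -- a ∈ F_i A, and a is a cocycle
  have haF : a ∈ FA i (ℓ+1) := by
    rw [hFA]
    show f (ℓ+1) a ∈ FB i (ℓ+1)
    rw [hfa]
    exact sub_mem hx (hFBd i ℓ b' hb'F)
  have had : dA (ℓ+1) a = 0 := by
    apply hfinj (ℓ+1+1)
    rw [map_zero, hfd (ℓ+1) a, hfa, map_sub, hdx, hdd ℓ b', sub_self]
  -- δ [g (y - b')] = [a], so apply strictness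
  have hfa' : f (ℓ+1) a = dB ℓ (y - b') := by rw [map_sub, hy, hfa]
  have hdc0 : dC ℓ (g ℓ (y - b')) = 0 := by
    rw [← hgd ℓ (y - b'), ← hfa', hgf]
  obtain ⟨c₁, hc₁F, hc₁d, b₁, hgb₁, a₁, hfa₁, z, hz⟩ :=
    hstrict₁ i ℓ (g ℓ (y - b')) hdc0 (y - b') rfl a hfa'
      ⟨a, haF, had, 0, by rw [map_zero, sub_self]⟩
  -- lift c₁ to b₂ ∈ F_i B
  obtain ⟨b₂, hb₂F, hgb₂⟩ : ∃ b₂ ∈ FB i ℓ, g ℓ b₂ = c₁ := by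
    have := hc₁F; rw [hFC] at this; obtain ⟨b₂, h1, h2⟩ := this; exact ⟨b₂, h1, h2⟩
  -- dB b₂ = f a₂ with a₂ ∈ F_i A
  have hker₂ : dB ℓ b₂ ∈ LinearMap.ker (g (ℓ+1)) := by
    show g (ℓ+1) (dB ℓ b₂) = 0
    rw [hgd ℓ b₂, hgb₂, hc₁d]
  rw [hfg] at hker₂
  obtain ⟨a₂, hfa₂⟩ := hker₂
  have ha₂F : a₂ ∈ FA i (ℓ+1) := by
    rw [hFA]
    show f (ℓ+1) a₂ ∈ FB i (ℓ+1)
    rw [hfa₂]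
    exact hFBd i ℓ b₂ hb₂F
  -- b₁ - b₂ ∈ ker g = range f, giving a₁ - a₂ = dA w
  have hker₃ : b₁ - b₂ ∈ LinearMap.ker (g ℓ) := by
    simp only [LinearMap.mem_ker, map_sub, hgb₁, hgb₂, sub_self]
  rw [hfg] at hker₃
  obtain ⟨w, hw⟩ := hker₃
  have hdw : dA ℓ w = a₁ - a₂ := by
    apply hfinj (ℓ+1)
    rw [hfd ℓ w, hw, map_sub, map_sub, hfa₁, hfa₂]
  -- a - a₂ is an F_i A cocycle which is a coboundary in A, hence a coboundary in F_i A
  obtain ⟨u, huF, hu⟩ := hinjA i ℓ (a - a₂) (sub_mem haF ha₂F)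
    ⟨z + w, by rw [map_add, hz, hdw]; abel⟩
  -- assemble the answer
  refine ⟨b' + b₂ + f ℓ u, ?_, ?_⟩
  · refine add_mem (add_mem hb'F hb₂F) ?_
    have := huF; rw [hFA] at this; exact this
  · have hfu : dB ℓ (f ℓ u) = f (ℓ+1) (a - a₂) := by
      rw [← hu, hfd ℓ u]
    rw [map_add, map_add, hfu, map_sub, hfa, hfa₂]
    abel
end
end
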